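/- Let A : ℝ → ℝ^{n×n} and let x : ℝ → ℝⁿ be differentiable with x'(t) = A(t) x(t) for all t. Then for every integer i ≥ 1, the stacked vector t ↦ ξ̃_i(x(t)) = (x(t), ⊗²x(t), ..., ⊗ⁱx(t)) is differentiable and satisfies d/dt ξ̃_i(x(t)) = Ãⁱ(A(t)) ξ̃_i(x(t)) for all t. -/

import Mathlib

open Matrix

noncomputable section

/-- `M ≼ 0` for a (symmetric) matrix: `ξᵀ M ξ ≤ 0` for all `ξ`. -/
def NegSemidef {m : Type*} [Fintype m] (M : Matrix m m ℝ) : Prop :=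
  ∀ x : m → ℝ, x ⬝ᵥ M *ᵥ x ≤ 0

/-- Index type for Kronecker powers: `kronIdx n k` indexes the `(k+1)`-st Kronecker power
of an `n`-dimensional object. -/
def kronIdx (n : ℕ) : ℕ → Type
  | 0 => Fin n
  | k+1 => Fin n × kronIdx n k

instance kronIdxFintype (n : ℕ) : ∀ k, Fintype (kronIdx n k)
  | 0 => inferInstanceAs (Fintype (Fin n))
  | k+1 => @instFintypeProd _ _ _ (kronIdxFintype n k)

instance kronIdxDecEq (n : ℕ) : ∀ k, DecidableEq (kronIdx n k)
  | 0 => inferInstanceAs (DecidableEq (Fin n))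
  | k+1 => @instDecidableEqProd _ _ _ (kronIdxDecEq n k)

/-- `matKronPow M k = ⊗^{k+1} M`, the `(k+1)`-st Kronecker power of the matrix `M`
(so `matKronPow M 0 = ⊗¹M = M`). -/
def matKronPow {n : ℕ} (M : Matrix (Fin n) (Fin n) ℝ) : ∀ k, Matrix (kronIdx n k) (kronIdx n k) ℝ
  | 0 => M
  | k+1 => Matrix.kroneckerMap (· * ·) M (matKronPow M k)

/-- Kronecker product of two vectors. -/
def vecKron {α β : Type*} (u : α → ℝ) (v : β → ℝ) : α × β → ℝ := fun p => u p.1 * v p.2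

/-- `vecKronPow x k = ⊗^{k+1} x`, the `(k+1)`-st Kronecker power of the vector `x`. -/
def vecKronPow {n : ℕ} (x : Fin n → ℝ) : ∀ k, kronIdx n k → ℝ
  | 0 => x
  | k+1 => vecKron x (vecKronPow x k)

/-- The lifted matrices: `liftA A k = 𝒜^{k+1}(A)`, with `𝒜¹(A) = A` and
`𝒜^{k+1}(A) = Iₙ ⊗ 𝒜^k(A) + A ⊗ I_{n^k}`. -/
def liftA {n : ℕ} (A : Matrix (Fin n) (Fin n) ℝ) : ∀ k, Matrix (kronIdx n k) (kronIdx n k) ℝ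
  | 0 => A
  | k+1 => Matrix.kroneckerMap (· * ·) (1 : Matrix (Fin n) (Fin n) ℝ) (liftA A k)
      + Matrix.kroneckerMap (· * ·) A (1 : Matrix (kronIdx n k) (kronIdx n k) ℝ)

/-- Index type of the stacked hierarchy system of degree `i`: blocks `k = 0, …, i-1`
corresponding to Kronecker powers `1, …, i`; its cardinality is `ñ_i = n + n² + ⋯ + nⁱ`. -/
abbrev tildeIdx (n i : ℕ) : Type := Σ k : Fin i, kronIdx n k

/-- `Ãⁱ(A) = diag(𝒜¹(A), 𝒜²(A), …, 𝒜ⁱ(A))`. -/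
def tildeA {n : ℕ} (A : Matrix (Fin n) (Fin n) ℝ) (i : ℕ) :
    Matrix (tildeIdx n i) (tildeIdx n i) ℝ :=
  Matrix.blockDiagonal' (fun k : Fin i => liftA A k)

/-- `diag(P, ⊗²P, …, ⊗ⁱP)`. -/
def tildeKronPow {n : ℕ} (P : Matrix (Fin n) (Fin n) ℝ) (i : ℕ) :
    Matrix (tildeIdx n i) (tildeIdx n i) ℝ :=
  Matrix.blockDiagonal' (fun k : Fin i => matKronPow P k)

/-- `ξ̃_i(x) = (x, ⊗²x, …, ⊗ⁱx)`, the stacked vector of Kronecker powers of `x`. -/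
def tildeXi {n : ℕ} (i : ℕ) (x : Fin n → ℝ) : tildeIdx n i → ℝ :=
  fun p => vecKronPow x p.1 p.2

/-!
If `x' = A x` and `w' = 𝒜ᵏ(A) w` with `w = ⊗ᵏx`, the product rule and the mixed-product property
give `(x ⊗ w)' = A x ⊗ w + x ⊗ 𝒜ᵏ(A) w = (A ⊗ I + I ⊗ 𝒜ᵏ(A)) (x ⊗ w) = 𝒜ᵏ⁺¹(A) (x ⊗ w)`, so by
induction `(⊗ᵏx)' = 𝒜ᵏ(A) ⊗ᵏx` for every `k`; the block-diagonal `Ãⁱ(A)` acts on `ξ̃_i(x)` blockwise.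
-/

namespace Matrix

theorem blockDiagonal'_mulVec_apply {o R : Type*} {m : o → Type*} [Fintype o] [DecidableEq o]
    [∀ k, Fintype (m k)] [NonUnitalNonAssocSemiring R] (M : ∀ k, Matrix (m k) (m k) R)
    (v : (Σ k, m k) → R) (k : o) (b : m k) :
    (blockDiagonal' M *ᵥ v) ⟨k, b⟩ = (M k *ᵥ fun b' => v ⟨k, b'⟩) b := by
  simp only [mulVec, dotProduct, Fintype.sum_sigma, blockDiagonal'_apply]
  rw [Finset.sum_eq_single k (fun k' _ hk' => by simp [Ne.symm hk']) (by simp)]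
  simp

theorem kroneckerMap_mul_mulVec_vecKron {α β : Type*} [Fintype α] [Fintype β]
    (M : Matrix α α ℝ) (N : Matrix β β ℝ) (u : α → ℝ) (v : β → ℝ) :
    kroneckerMap (· * ·) M N *ᵥ vecKron u v = vecKron (M *ᵥ u) (N *ᵥ v) := by
  ext ⟨a, b⟩
  simp only [mulVec, kroneckerMap_apply, dotProduct, vecKron, Fintype.sum_prod_type,
    Finset.sum_mul_sum]
  exact Finset.sum_congr rfl fun c _ => Finset.sum_congr rfl fun d _ => by ring

end Matrix

open Matrix

theorem liftA_succ_mulVec_vecKron {n : ℕ} (A : Matrix (Fin n) (Fin n) ℝ) (k : ℕ)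
    (u : Fin n → ℝ) (w : kronIdx n k → ℝ) :
    liftA A (k + 1) *ᵥ vecKron u w = vecKron (A *ᵥ u) w + vecKron u (liftA A k *ᵥ w) := by
  -- `kronIdx n (k + 1)` is `Fin n × kronIdx n k` only after unfolding, so `add_mulVec` needs the cast.
  change (_ + _ : Matrix (Fin n × kronIdx n k) (Fin n × kronIdx n k) ℝ) *ᵥ _ = _
  rw [add_mulVec, kroneckerMap_mul_mulVec_vecKron, kroneckerMap_mul_mulVec_vecKron,
    one_mulVec, one_mulVec, add_comm]

theorem HasDerivAt.vecKron {α β : Type*} [Fintype α] [Fintype β] {u : ℝ → α → ℝ}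
    {v : ℝ → β → ℝ} {u' : α → ℝ} {v' : β → ℝ} {t : ℝ} (hu : HasDerivAt u u' t)
    (hv : HasDerivAt v v' t) :
    HasDerivAt (fun s => vecKron (u s) (v s)) (vecKron u' (v t) + vecKron (u t) v') t := by
  refine hasDerivAt_pi.2 fun ⟨a, b⟩ => ?_
  exact (hasDerivAt_pi.1 hu a).mul (hasDerivAt_pi.1 hv b)

theorem HasDerivAt.vecKronPow {n : ℕ} {A : Matrix (Fin n) (Fin n) ℝ} {x : ℝ → Fin n → ℝ}
    {t : ℝ} (hx : HasDerivAt x (A *ᵥ x t) t) (k : ℕ) :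
    HasDerivAt (fun s => vecKronPow (x s) k) (liftA A k *ᵥ vecKronPow (x t) k) t := by
  induction k with
  | zero => exact hx
  | succ k ih =>
    rw [_root_.vecKronPow, liftA_succ_mulVec_vecKron]
    exact hx.vecKron ih

theorem tildeA_mulVec_tildeXi {n : ℕ} (A : Matrix (Fin n) (Fin n) ℝ) (i : ℕ) (x : Fin n → ℝ)
    (k : Fin i) (b : kronIdx n k) :
    (tildeA A i *ᵥ tildeXi i x) ⟨k, b⟩ = (liftA A k *ᵥ vecKronPow x k) b :=
  blockDiagonal'_mulVec_apply (fun k : Fin i => liftA A k) (tildeXi i x) k b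

theorem stmt19_general {n : ℕ} (A : ℝ → Matrix (Fin n) (Fin n) ℝ) (x : ℝ → Fin n → ℝ)
    (hx : ∀ t : ℝ, HasDerivAt x (A t *ᵥ x t) t) (i : ℕ) :
    ∀ t : ℝ, HasDerivAt (fun s => tildeXi i (x s)) (tildeA (A t) i *ᵥ tildeXi i (x t)) t := by
  intro t
  refine hasDerivAt_pi.2 fun ⟨k, b⟩ => ?_
  rw [tildeA_mulVec_tildeXi]
  exact hasDerivAt_pi.1 ((hx t).vecKronPow k) b

/-- if `x'(t) = A(t)x(t)` for all `t`, then for every `i ≥ 1` the stacked vector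
`t ↦ ξ̃_i(x(t))` is differentiable with derivative `Ãⁱ(A(t)) ξ̃_i(x(t))`. -/
theorem stmt19 {n : ℕ} (A : ℝ → Matrix (Fin n) (Fin n) ℝ) (x : ℝ → Fin n → ℝ)
    (hx : ∀ t : ℝ, HasDerivAt x (A t *ᵥ x t) t) (i : ℕ) (hi : 1 ≤ i) :
    ∀ t : ℝ, HasDerivAt (fun s => tildeXi i (x s)) (tildeA (A t) i *ᵥ tildeXi i (x t)) t :=
  stmt19_general A x hx i
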